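/- arXiv:0808.1975 — 4 statements merged into one kernel-verified Lean document; each statement's English description precedes it below -/
import Mathlib

section
/- Let (E, d) be an N-differential module with d^N = 0 and let k, ℓ ≥ 1 with k + ℓ ≤ N - 1. Exactness holds at H_{(ℓ)} in the fundamental hexagon: the image of [d]^k : H_{(k+ℓ)} → H_{(ℓ)} equals the kernel of [i]^{N-k-ℓ} : H_{(ℓ)} → H_{(N-k)}. -/
/-- Exactness of the fundamental hexagon at `H_{(ℓ)}` for an `N`-differential module `(E, d)`
with `d^N = 0`, `k, ℓ ≥ 1`, `k + ℓ ≤ N - 1`: the image of `[d]^k : H_{(k+ℓ)} → H_{(ℓ)}`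
equals the kernel of `[i]^{N-k-ℓ} : H_{(ℓ)} → H_{(N-k)}`, where
`H_{(m)} = Ker(d^m)/Im(d^{N-m})`.  Stated elementwise: for `x ∈ Ker(d^ℓ)`, the class of `x`
is of the form `[d]^k [z]` for some `z ∈ Ker(d^{k+ℓ})` iff its class vanishes in
`H_{(N-k)}`, i.e. `x ∈ Im(d^k)`. -/
theorem hexagon_exact_at_ell {R E : Type*} [CommRing R] [AddCommGroup E] [Module R E]
    (N : ℕ) (d : E →ₗ[R] E) (hd : d ^ N = 0)
    (k ℓ : ℕ) (hk : 1 ≤ k) (hl : 1 ≤ ℓ) (hkl : k + ℓ ≤ N - 1) :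
    ∀ x : E, (d ^ ℓ) x = 0 →
      ((∃ z : E, (d ^ (k + ℓ)) z = 0 ∧ x - (d ^ k) z ∈ LinearMap.range (d ^ (N - ℓ))) ↔
        x ∈ LinearMap.range (d ^ k)) := by
  intro x hx
  constructor
  · rintro ⟨z, hz, w, hw⟩
    refine ⟨z + (d ^ (N - ℓ - k)) w, ?_⟩
    have h : N - ℓ = k + (N - ℓ - k) := by omega
    have h2 : (d ^ (N - ℓ)) w = (d ^ k) ((d ^ (N - ℓ - k)) w) := by
      nth_rewrite 1 [h]
      rw [pow_add, Module.End.mul_apply]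
    rw [map_add, ← h2, hw]
    abel
  · rintro ⟨y, hy⟩
    refine ⟨y, ?_, 0, by simp [hy]⟩
    have h : (d ^ (k + ℓ)) y = (d ^ ℓ) x := by
      rw [← hy, add_comm, pow_add, Module.End.mul_apply]
    rw [h, hx]
end

section
/- Let (E, d) be a graded 3-complex of vector spaces (d of degree 1, d^3 = 0) such that H^{2n}_{(1)}(E) = 0 and H^{2n}_{(2)}(E) = 0 for all n ≥ 1. Then for every n ≥ 1 the induced map [i] : H^{2n+1}_{(1)}(E) → H^{2n+1}_{(2)}(E) is an isomorphism. -/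
/-- Let `(E, d)` be a graded 3-complex of vector spaces (`d` of degree 1, `d³ = 0`, with
`d2 n = d ∘ d` the square of the differential) such that `H^{2n}_{(1)}(E) = 0` and
`H^{2n}_{(2)}(E) = 0` for all `n ≥ 1`.  Then for every `n ≥ 1` (written `n = m + 1`, so the
odd degree is `2n + 1 = 2m + 3`) the induced map
`[i] : H^{2n+1}_{(1)}(E) → H^{2n+1}_{(2)}(E)` is an isomorphism, where
`H^p_{(k)}(E) = Ker(d^k : E^p → E^{p+k}) / d^{3-k}(E^{p+k-3})`. -/
theorem three_complex_odd_iso {K : Type*} [Field K] {E : ℕ → Type*}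
    [∀ n, AddCommGroup (E n)] [∀ n, Module K (E n)]
    (d : ∀ n, E n →ₗ[K] E (n + 1)) (d2 : ∀ n, E n →ₗ[K] E (n + 2))
    (hd2 : ∀ n, d2 n = (d (n + 1)).comp (d n))
    (hd3 : ∀ n, (d (n + 2)).comp (d2 n) = 0)
    (hvan1 : ∀ m : ℕ, LinearMap.ker (d (2 * m + 2)) ≤ LinearMap.range (d2 (2 * m)))
    (hvan2 : ∀ m : ℕ, LinearMap.ker (d2 (2 * m + 2)) ≤ LinearMap.range (d (2 * m + 1)))
    (m : ℕ) :
    ∃ f : (LinearMap.ker (d (2 * m + 3)) ⧸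
            Submodule.comap (LinearMap.ker (d (2 * m + 3))).subtype
              (LinearMap.range (d2 (2 * m + 1))))
          ≃ₗ[K]
          (LinearMap.ker (d2 (2 * m + 3)) ⧸
            Submodule.comap (LinearMap.ker (d2 (2 * m + 3))).subtype
              (LinearMap.range (d (2 * m + 2)))),
      ∀ (x : E (2 * m + 3)) (hx : x ∈ LinearMap.ker (d (2 * m + 3)))
        (hx' : x ∈ LinearMap.ker (d2 (2 * m + 3))),
        f (Submodule.Quotient.mk ⟨x, hx⟩) = Submodule.Quotient.mk ⟨x, hx'⟩ := by
    -- ker d ≤ ker d2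
  have hle : LinearMap.ker (d (2 * m + 3)) ≤ LinearMap.ker (d2 (2 * m + 3)) := by
    intro x hx
    simp only [LinearMap.mem_ker] at *
    rw [hd2]
    simp [LinearMap.comp_apply, hx]
  set N1 := Submodule.comap (LinearMap.ker (d (2 * m + 3))).subtype
      (LinearMap.range (d2 (2 * m + 1)))
  set N2 := Submodule.comap (LinearMap.ker (d2 (2 * m + 3))).subtype
      (LinearMap.range (d (2 * m + 2)))
  set φ : LinearMap.ker (d (2 * m + 3)) →ₗ[K]
      (LinearMap.ker (d2 (2 * m + 3)) ⧸ N2) :=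
    N2.mkQ.comp (Submodule.inclusion hle) with hφ
  have hN1 : N1 ≤ LinearMap.ker φ := by
    rintro ⟨x, hx⟩ ⟨y, hy⟩
    simp only [hφ, LinearMap.mem_ker, LinearMap.comp_apply, Submodule.mkQ_apply,
      Submodule.Quotient.mk_eq_zero]
    refine ⟨d (2 * m + 1) y, ?_⟩
    rw [hd2] at hy
    exact hy
  set F : (LinearMap.ker (d (2 * m + 3)) ⧸ N1) →ₗ[K]
      (LinearMap.ker (d2 (2 * m + 3)) ⧸ N2) := N1.liftQ φ hN1 with hF
  have hFmk : ∀ (x : E (2 * m + 3)) (hx : x ∈ LinearMap.ker (d (2 * m + 3)))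
      (hx' : x ∈ LinearMap.ker (d2 (2 * m + 3))),
      F (Submodule.Quotient.mk ⟨x, hx⟩) = Submodule.Quotient.mk ⟨x, hx'⟩ := by
    intro x hx hx'
    rfl
  have hinj : Function.Injective F := by
    rw [hF, ← LinearMap.ker_eq_bot, Submodule.ker_liftQ_eq_bot]
    rintro ⟨x, hx⟩ hxφ
    simp only [hφ, LinearMap.mem_ker, LinearMap.comp_apply, Submodule.mkQ_apply,
      Submodule.Quotient.mk_eq_zero] at hxφ
    obtain ⟨y, hy⟩ := hxφ
    -- y ∈ ker d2 (2m+2)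
    have hy2 : y ∈ LinearMap.ker (d2 (2 * m + 2)) := by
      rw [LinearMap.mem_ker, hd2, LinearMap.comp_apply, hy]
      exact hx
    obtain ⟨z, hz⟩ := hvan2 m hy2
    refine ⟨z, ?_⟩
    rw [hd2, LinearMap.comp_apply, hz, hy]
    rfl
  have hsurj : Function.Surjective F := by
    rintro q
    obtain ⟨⟨x, hx⟩, rfl⟩ := Submodule.mkQ_surjective N2 q
    have hdx : d (2 * m + 3) x ∈ LinearMap.ker (d (2 * (m + 1) + 2)) := by
      rw [LinearMap.mem_ker]
      have hx0 : d2 (2 * m + 3) x = 0 := hx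
      rw [hd2] at hx0
      exact hx0
    obtain ⟨y, hy⟩ := hvan1 (m + 1) hdx
    -- hy : d2 (2*m+2) y = d (2*m+3) x
    rw [hd2, LinearMap.comp_apply] at hy
    have hy' : (d (2 * m + 3)) ((d (2 * m + 2)) y) = (d (2 * m + 3)) x := hy
    set w : E (2 * m + 3) := d (2 * m + 2) y with hw
    have hxw : x - w ∈ LinearMap.ker (d (2 * m + 3)) := by
      rw [LinearMap.mem_ker, map_sub, hw, hy', sub_self]
    have hxw' : x - w ∈ LinearMap.ker (d2 (2 * m + 3)) :=
      hle hxw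
    refine ⟨Submodule.Quotient.mk ⟨x - w, hxw⟩, ?_⟩
    rw [hFmk (x - w) hxw hxw', Submodule.mkQ_apply, Submodule.Quotient.eq]
    refine ⟨-y, ?_⟩
    show (d (2 * m + 2)) (-y) = (x - w) - x
    rw [map_neg]
    show -(d (2 * m + 2) y) = x - d (2 * m + 2) y - x
    abel
  exact ⟨LinearEquiv.ofBijective F ⟨hinj, hsurj⟩, fun x hx hx' => hFmk x hx hx'⟩
end

section
/- Let (E, d) be a graded 3-complex of finite-dimensional vector spaces in each degree with H^{2}_{(1)}(E) = H^{2}_{(2)}(E) = 0. Then there is an exact sequence 0 → H^0_{(1)} → H^0_{(2)} → H^1_{(1)} → H^1_{(2)} → 0, and hence dim H^1_{(2)} = dim H^1_{(1)} + dim H^0_{(1)} − dim H^0_{(2)}. -/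
/-- Let `(E, d)` be a graded 3-complex of finite-dimensional vector spaces
(`d2 n = d ∘ d`, `d³ = 0`) with `H²_{(1)}(E) = H²_{(2)}(E) = 0`.  Then the sequence
`0 → H⁰_{(1)} → H⁰_{(2)} → H¹_{(1)} → H¹_{(2)} → 0` is exact —
here `H⁰_{(1)} = Ker(d : E⁰ → E¹)`, `H⁰_{(2)} = Ker(d² : E⁰ → E²)`,
`H¹_{(1)} = Ker(d : E¹ → E²)` and `H¹_{(2)} = Ker(d² : E¹ → E³)/d(E⁰)`,
the maps being the inclusion `[i]`, the induced `[d]`, and the induced `[i]` —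
and hence `dim H¹_{(2)} + dim H⁰_{(2)} = dim H¹_{(1)} + dim H⁰_{(1)}`. -/
theorem three_complex_four_term_sequence {K : Type*} [Field K] {E : ℕ → Type*}
    [∀ n, AddCommGroup (E n)] [∀ n, Module K (E n)] [∀ n, FiniteDimensional K (E n)]
    (d : ∀ n, E n →ₗ[K] E (n + 1)) (d2 : ∀ n, E n →ₗ[K] E (n + 2))
    (hd2 : ∀ n, d2 n = (d (n + 1)).comp (d n))
    (hd3 : ∀ n, (d (n + 2)).comp (d2 n) = 0)
    (hvan1 : LinearMap.ker (d 2) ≤ LinearMap.range (d2 0))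
    (hvan2 : LinearMap.ker (d2 2) ≤ LinearMap.range (d 1)) :
    -- the map `[i] : H⁰_{(1)} → H⁰_{(2)}` (the inclusion) is well defined and injective
    (∀ x : E 0, (d 0) x = 0 → (d2 0) x = 0) ∧
    -- exactness at `H⁰_{(2)}`: kernel of `[d] : H⁰_{(2)} → H¹_{(1)}` = image of `[i]`
    (∀ x : E 0, (d2 0) x = 0 →
      ((d 0) x = 0 ↔ ∃ w : E 0, (d 0) w = 0 ∧ w = x)) ∧
    -- exactness at `H¹_{(1)}`: kernel of `[i] : H¹_{(1)} → H¹_{(2)}` = image of `[d]`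
    (∀ y : E 1, (d 1) y = 0 →
      (y ∈ LinearMap.range (d 0) ↔ ∃ x : E 0, (d2 0) x = 0 ∧ (d 0) x = y)) ∧
    -- exactness at `H¹_{(2)}`: the map `[i] : H¹_{(1)} → H¹_{(2)}` is surjective
    (∀ y : E 1, (d2 1) y = 0 →
      ∃ z : E 1, (d 1) z = 0 ∧ y - z ∈ LinearMap.range (d 0)) ∧
    -- the resulting dimension count
    Module.finrank K
        (LinearMap.ker (d2 1) ⧸
          Submodule.comap (LinearMap.ker (d2 1)).subtype (LinearMap.range (d 0)))
      + Module.finrank K (LinearMap.ker (d2 0))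
      = Module.finrank K (LinearMap.ker (d 1))
        + Module.finrank K (LinearMap.ker (d 0)) := by

  have hcomp0 : ∀ x : E 0, d2 0 x = d 1 (d 0 x) := by
    intro x; rw [hd2 0]; rfl
  have hcomp1 : ∀ y : E 1, d2 1 y = d 2 (d 1 y) := by
    intro y; rw [hd2 1]; rfl
  have h3 : ∀ x : E 0, d 2 (d2 0 x) = 0 := by
    intro x
    have := congrArg (fun f => f x) (hd3 0)
    simpa using this
  -- range (d2 0) = ker (d 2)
  have hrk : LinearMap.range (d2 0) = (LinearMap.ker (d 2) : Submodule K (E 2)) := by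
    apply le_antisymm
    · rintro _ ⟨x, rfl⟩
      exact h3 x
    · exact hvan1
  -- range (d 0) ≤ ker (d2 1)
  have hrk1 : LinearMap.range (d 0) ≤ LinearMap.ker (d2 1) := by
    rintro _ ⟨x, rfl⟩
    show d2 1 (d 0 x) = 0
    rw [hcomp1, ← hcomp0, h3]
  refine ⟨?_, ?_, ?_, ?_, ?_⟩
  · intro x hx
    rw [hcomp0, hx, map_zero]
  · intro x hx
    constructor
    · intro h; exact ⟨x, h, rfl⟩
    · rintro ⟨w, hw, rfl⟩; exact hw
  · intro y hy
    constructor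
    · rintro ⟨x, rfl⟩
      exact ⟨x, by rw [hcomp0, hy], rfl⟩
    · rintro ⟨x, _, rfl⟩; exact ⟨x, rfl⟩
  · intro y hy
    have : d 1 y ∈ LinearMap.ker (d 2) := by
      show d 2 (d 1 y) = 0
      rw [← hcomp1, hy]
    obtain ⟨x, hx⟩ := hvan1 this
    refine ⟨y - d 0 x, ?_, ⟨x, by abel⟩⟩
    rw [map_sub, ← hcomp0, hx, sub_self]
  · -- dimension count
    set V := LinearMap.ker (d2 1)
    set W := Submodule.comap V.subtype (LinearMap.range (d 0))
    have hWV : Module.finrank K W = Module.finrank K (LinearMap.range (d 0)) :=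
      (Submodule.comapSubtypeEquivOfLe hrk1).finrank_eq
    have hq : Module.finrank K (V ⧸ W) + Module.finrank K W = Module.finrank K V :=
      Submodule.finrank_quotient_add_finrank W
    have hr0 : Module.finrank K (LinearMap.range (d 0)) + Module.finrank K (LinearMap.ker (d 0))
        = Module.finrank K (E 0) := LinearMap.finrank_range_add_finrank_ker (d 0)
    have hr2 : Module.finrank K (LinearMap.range (d2 0)) + Module.finrank K (LinearMap.ker (d2 0))
        = Module.finrank K (E 0) := LinearMap.finrank_range_add_finrank_ker (d2 0)
    -- the map d1 restricted to V
    set f : V →ₗ[K] E (0 + 2) := (d 1).comp V.subtype with hf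
    have hfker : LinearMap.ker f = Submodule.comap V.subtype (LinearMap.ker (d 1)) := by
      ext ⟨y, hy⟩
      simp [hf, LinearMap.mem_ker]
    have hd1sub : LinearMap.ker (d 1) ≤ V := by
      intro y hy
      show d2 1 y = 0
      rw [hcomp1, hy, map_zero]
    have hfkerrank : Module.finrank K (LinearMap.ker f)
        = Module.finrank K (LinearMap.ker (d 1)) := by
      rw [hfker]
      exact (Submodule.comapSubtypeEquivOfLe hd1sub).finrank_eq
    have hfrange : LinearMap.range f = LinearMap.range (d2 0) := by
      apply le_antisymm
      · rintro _ ⟨⟨y, hy⟩, rfl⟩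
        have hz : f ⟨y, hy⟩ ∈ LinearMap.ker (d 2) := by
          show d 2 (d 1 y) = 0
          rw [← hcomp1]; exact hy
        exact hvan1 hz
      · rintro _ ⟨x, rfl⟩
        exact ⟨⟨d 0 x, hrk1 ⟨x, rfl⟩⟩, (hcomp0 x).symm⟩
    have hfrk : Module.finrank K (LinearMap.range f) + Module.finrank K (LinearMap.ker f)
        = Module.finrank K V := LinearMap.finrank_range_add_finrank_ker f
    rw [hfrange, hfkerrank] at hfrk
    rw [hWV] at hq
    omega
end

section
/- Let (E,d) be an N-differential module and 1 ≤ k ≤ N-2. Exactness of the hexagon implies: if H_{(k)}(E) = 0 and H_{(N-k-ℓ)}(E) = 0 for some ℓ with 1 ≤ ℓ, k+ℓ ≤ N-1, then the map [d]^k : H_{(k+ℓ)}(E) → H_{(ℓ)}(E) is injective and [i]^{N-k-ℓ} : H_{(ℓ)}(E) → H_{(N-k)}(E) is surjective onto the kernel of [d]^ℓ. -/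
/-- Corollary of the exact hexagon for an `N`-differential module `(E, d)` with `d^N = 0`:
if `H_{(k)}(E) = 0` (i.e. `Ker(d^k) ⊆ Im(d^{N-k})`) and `H_{(N-k-ℓ)}(E) = 0`
(i.e. `Ker(d^{N-k-ℓ}) ⊆ Im(d^{k+ℓ})`) for `1 ≤ k ≤ N-2`, `1 ≤ ℓ`, `k+ℓ ≤ N-1`, then
`[d]^k : H_{(k+ℓ)} → H_{(ℓ)}` is injective and `[i]^{N-k-ℓ} : H_{(ℓ)} → H_{(N-k)}` is
surjective onto the kernel of `[d]^ℓ : H_{(N-k)} → H_{(N-k-ℓ)}`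
(`H_{(m)} = Ker(d^m)/Im(d^{N-m})`, stated elementwise). -/
theorem hexagon_corollary {R E : Type*} [CommRing R] [AddCommGroup E] [Module R E]
    (N : ℕ) (d : E →ₗ[R] E) (hd : d ^ N = 0)
    (k ℓ : ℕ) (hk1 : 1 ≤ k) (hk2 : k ≤ N - 2) (hl : 1 ≤ ℓ) (hkl : k + ℓ ≤ N - 1)
    (hvank : LinearMap.ker (d ^ k) ≤ LinearMap.range (d ^ (N - k)))
    (hvan2 : LinearMap.ker (d ^ (N - k - ℓ)) ≤ LinearMap.range (d ^ (k + ℓ))) :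
    -- `[d]^k : H_{(k+ℓ)} → H_{(ℓ)}` is injective
    (∀ x : E, (d ^ (k + ℓ)) x = 0 → (d ^ k) x ∈ LinearMap.range (d ^ (N - ℓ)) →
      x ∈ LinearMap.range (d ^ (N - (k + ℓ)))) ∧
    -- `[i]^{N-k-ℓ} : H_{(ℓ)} → H_{(N-k)}` is surjective onto the kernel of `[d]^ℓ`
    (∀ y : E, (d ^ (N - k)) y = 0 → (d ^ ℓ) y ∈ LinearMap.range (d ^ (k + ℓ)) →
      ∃ x : E, (d ^ ℓ) x = 0 ∧ y - x ∈ LinearMap.range (d ^ k)) := by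
  have hN : 3 ≤ N := by omega
  constructor
  · rintro x hx ⟨w, hw⟩
    have e1 : k + (N - ℓ - k) = N - ℓ := by omega
    have h1 : x - (d ^ (N - ℓ - k)) w ∈ LinearMap.ker (d ^ k) := by
      simp only [LinearMap.mem_ker, map_sub, ← Module.End.mul_apply, ← pow_add, e1, hw,
        sub_self]
    obtain ⟨u, hu⟩ := hvank h1
    refine ⟨(d ^ ℓ) u + w, ?_⟩
    have e2 : N - (k + ℓ) + ℓ = N - k := by omega
    have e3 : N - (k + ℓ) = N - ℓ - k := by omega
    rw [map_add, ← Module.End.mul_apply, ← pow_add, e2, hu, e3]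
    abel
  · rintro y hy ⟨z, hz⟩
    refine ⟨y - (d ^ k) z, ?_, z, ?_⟩
    · rw [map_sub, ← Module.End.mul_apply, ← pow_add, add_comm ℓ k, hz, sub_self]
    · abel
end
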